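/- Euler's equations from the Boltzmann–Hamel equations for the free rigid body: On the open set of ℝ³ with Euler angle coordinates (ψ, θ, φ) where cos θ ≠ 0, let Ψ be the 3×3 matrix with rows (−sin θ, 0, 1), (cos θ sin φ, cos φ, 0), (cos θ cos φ, −sin φ, 0). Then Ψ is invertible with inverse Φ having rows (0, sec θ sin φ, sec θ cos φ), (0, cos φ, −sin φ), (1, tan θ sin φ, tan θ cos φ); the nonzero Hamel coefficients are exactly γ¹₂₃ = 1 = −γ¹₃₂, γ²₃₁ = 1 = −γ²₁₃, γ³₁₂ = 1 = −γ³₂₁; and for any C² curve of Euler angles with quasi-velocities u = (u₁,u₂,u₃) = Ψ q̇ and the Lagrangian ℒ(q,u) = ½(I_xx u₁² + I_yy u₂² + I_zz u₃²) with constants I_xx, I_yy, I_zz, the Boltzmann–Hamel expressions d/dt(∂ℒ/∂u_i) − (∂ℒ/∂q^j)Φ^j_i − (∂ℒ/∂u_j) γ^j_{ki} u_k equal respectively I_xx u̇₁ + (I_zz − I_yy) u₂ u₃, I_yy u̇₂ + (I_xx − I_zz) u₁ u₃, and I_zz u̇₃ + (I_yy − I_xx) u₁ u₂. -/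

import Mathlib

/-!
The rows `ω^s` of `Ψ` are the body components of angular velocity, viewed as 1-forms in the Euler
angles, and `γ^s_{pq} = dω^s(Φ_q, Φ_p)` is their exterior derivative evaluated on the dual frame.
Computing `dω^s` and pulling it back by `Φ` gives the Levi-Civita symbol `ε_{spq}`, the structure
constants of `so(3)`. Since `ℒ` does not depend on `q` and `∂ℒ/∂u = I u`, the Boltzmann–Hamel
expression then collapses to `I u̇ − (I u) × u = I u̇ + u × (I u)`, which is Euler's equation.
-/

open Matrix Real

noncomputable section

/-- Partial derivative of `f : ℝ³ → ℝ` at `x` in the `j`-th coordinate direction. -/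
def pder (f : (Fin 3 → ℝ) → ℝ) (x : Fin 3 → ℝ) (j : Fin 3) : ℝ :=
  fderiv ℝ f x (Pi.single j 1)

/-- Hamel coefficients `γ^s_{pq}(x) = (∂Ψ^s_i/∂x^j − ∂Ψ^s_j/∂x^i) Φ^i_p Φ^j_q`. -/
def hamel (Ψ Φ : (Fin 3 → ℝ) → Matrix (Fin 3) (Fin 3) ℝ)
    (x : Fin 3 → ℝ) (s p r : Fin 3) : ℝ :=
  ∑ i, ∑ j, (pder (fun y => Ψ y s i) x j - pder (fun y => Ψ y s j) x i) * Φ x i p * Φ x j r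

/-- Quasi-velocities `u^j(t) = Ψ^j_i(γ(t)) γ̇^i(t)` of a curve `γ`. -/
def cvel (Ψ : (Fin 3 → ℝ) → Matrix (Fin 3) (Fin 3) ℝ)
    (γ : ℝ → Fin 3 → ℝ) (t : ℝ) : Fin 3 → ℝ :=
  fun j => ∑ i, Ψ (γ t) j i * deriv (fun t' => γ t' i) t

/-- The quasi-velocity transformation of the free rigid body in Type-I Euler angles
`q = (ψ, θ, φ)`: the quasi-velocities are the body components of angular velocity. -/
def ΨRB (q : Fin 3 → ℝ) : Matrix (Fin 3) (Fin 3) ℝ :=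
  !![-sin (q 1), 0, 1;
     cos (q 1) * sin (q 2), cos (q 2), 0;
     cos (q 1) * cos (q 2), -sin (q 2), 0]

/-- The claimed inverse (`sec θ = 1/cos θ`, `tan θ = sin θ/cos θ`). -/
def ΦRB (q : Fin 3 → ℝ) : Matrix (Fin 3) (Fin 3) ℝ :=
  !![0, (1 / cos (q 1)) * sin (q 2), (1 / cos (q 1)) * cos (q 2);
     0, cos (q 2), -sin (q 2);
     1, (sin (q 1) / cos (q 1)) * sin (q 2), (sin (q 1) / cos (q 1)) * cos (q 2)]

/-- The rigid-body Lagrangian in quasi-velocities: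
`ℒ(q,u) = ½(I_xx u₁² + I_yy u₂² + I_zz u₃²)`. -/
def LagRB (Ix Iy Iz : ℝ) (x u : Fin 3 → ℝ) : ℝ :=
  (Ix * (u 0) ^ 2 + Iy * (u 1) ^ 2 + Iz * (u 2) ^ 2) / 2

section PartialDerivative

variable {f g : (Fin 3 → ℝ) → ℝ} {x : Fin 3 → ℝ} {j : Fin 3}

lemma pder_const (c : ℝ) : pder (fun _ => c) x j = 0 := by
  simp [pder]

lemma pder_apply (k : Fin 3) : pder (fun y => y k) x j = if k = j then 1 else 0 := by
  rw [pder, (hasFDerivAt_apply k x).fderiv]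
  simp [Pi.single_apply]

lemma pder_add (hf : DifferentiableAt ℝ f x) (hg : DifferentiableAt ℝ g x) :
    pder (fun y => f y + g y) x j = pder f x j + pder g x j := by
  simp [pder, fderiv_fun_add hf hg]

lemma pder_mul (hf : DifferentiableAt ℝ f x) (hg : DifferentiableAt ℝ g x) :
    pder (fun y => f y * g y) x j = pder f x j * g x + f x * pder g x j := by
  simp only [pder, fderiv_fun_mul hf hg, _root_.add_apply, _root_.smul_apply, smul_eq_mul]
  ring

lemma pder_pow (hf : DifferentiableAt ℝ f x) (n : ℕ) :
    pder (fun y => f y ^ n) x j = n * f x ^ (n - 1) * pder f x j := by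
  simp [pder, fderiv_fun_pow n hf]

lemma pder_div_const (hf : DifferentiableAt ℝ f x) (c : ℝ) :
    pder (fun y => f y / c) x j = pder f x j / c := by
  simp only [div_eq_mul_inv]
  rw [pder_mul hf (differentiableAt_const _), pder_const]
  ring

lemma pder_comp {h : ℝ → ℝ} (hh : DifferentiableAt ℝ h (f x)) (hf : DifferentiableAt ℝ f x) :
    pder (fun y => h (f y)) x j = deriv h (f x) * pder f x j := by
  have hcomp : HasFDerivAt (fun y => h (f y)) (deriv h (f x) • fderiv ℝ f x) x :=
    hh.hasDerivAt.comp_hasFDerivAt x hf.hasFDerivAt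
  simp [pder, hcomp.fderiv]

end PartialDerivative

-- Entry `(i, j)` is `dΨ^s(∂_j, ∂_i)`, where `Ψ^s = Ψ^s_i dx^i` is the `s`-th row of `Ψ`.
def exteriorDerivRow (Ψ : (Fin 3 → ℝ) → Matrix (Fin 3) (Fin 3) ℝ) (x : Fin 3 → ℝ) (s : Fin 3) :
    Matrix (Fin 3) (Fin 3) ℝ :=
  of fun i j => pder (fun y => Ψ y s i) x j - pder (fun y => Ψ y s j) x i

lemma hamel_eq_transpose_mul_exteriorDerivRow_mul
    (Ψ Φ : (Fin 3 → ℝ) → Matrix (Fin 3) (Fin 3) ℝ) (x : Fin 3 → ℝ) (s p r : Fin 3) :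
    hamel Ψ Φ x s p r = ((Φ x)ᵀ * exteriorDerivRow Ψ x s * Φ x) p r := by
  simp only [hamel, mul_apply, transpose_apply, exteriorDerivRow, of_apply, Finset.sum_mul]
  rw [Finset.sum_comm]
  exact Finset.sum_congr rfl fun i _ => Finset.sum_congr rfl fun j _ => by ring

def leviCivita (s p w : Fin 3) : ℝ :=
  if s = 0 ∧ p = 1 ∧ w = 2 then 1
  else if s = 0 ∧ p = 2 ∧ w = 1 then -1
  else if s = 1 ∧ p = 2 ∧ w = 0 then 1
  else if s = 1 ∧ p = 0 ∧ w = 2 then -1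
  else if s = 2 ∧ p = 0 ∧ w = 1 then 1
  else if s = 2 ∧ p = 1 ∧ w = 0 then -1
  else 0

lemma ΦRB_mul_ΨRB {q : Fin 3 → ℝ} (hq : cos (q 1) ≠ 0) : ΦRB q * ΨRB q = 1 := by
  rw [ΦRB, ΨRB, mul_fin_three, one_fin_three]
  simp only [EmbeddingLike.apply_eq_iff_eq, vecCons_inj, and_true]
  grind [sin_sq_add_cos_sq]

lemma ΨRB_mul_ΦRB {q : Fin 3 → ℝ} (hq : cos (q 1) ≠ 0) : ΨRB q * ΦRB q = 1 :=
  mul_eq_one_comm.mp (ΦRB_mul_ΨRB hq)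

lemma transpose_ΦRB (q : Fin 3 → ℝ) :
    (ΦRB q)ᵀ =
      !![0, 0, 1;
         (1 / cos (q 1)) * sin (q 2), cos (q 2), (sin (q 1) / cos (q 1)) * sin (q 2);
         (1 / cos (q 1)) * cos (q 2), -sin (q 2), (sin (q 1) / cos (q 1)) * cos (q 2)] := by
  ext i j
  fin_cases i <;> fin_cases j <;> rfl

lemma exteriorDerivRow_ΨRB (q : Fin 3 → ℝ) (s : Fin 3) :
    exteriorDerivRow ΨRB q s =
      ![!![0, -cos (q 1), 0; cos (q 1), 0, 0; 0, 0, 0],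
        !![0, -sin (q 1) * sin (q 2), cos (q 1) * cos (q 2);
           sin (q 1) * sin (q 2), 0, -sin (q 2);
           -(cos (q 1) * cos (q 2)), sin (q 2), 0],
        !![0, -sin (q 1) * cos (q 2), -cos (q 1) * sin (q 2);
           sin (q 1) * cos (q 2), 0, -cos (q 2);
           cos (q 1) * sin (q 2), cos (q 2), 0]] s := by
  ext i j
  fin_cases s <;> fin_cases i <;> fin_cases j <;>
    simp (disch := fun_prop) [exteriorDerivRow, ΨRB, pder_mul, pder_comp, pder_apply, pder_const]

lemma transpose_ΦRB_mul_exteriorDerivRow_ΨRB_mul_ΦRB {q : Fin 3 → ℝ} (hq : cos (q 1) ≠ 0)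
    (s : Fin 3) :
    (ΦRB q)ᵀ * exteriorDerivRow ΨRB q s * ΦRB q =
      ![!![0, 0, 0; 0, 0, 1; 0, -1, 0], !![0, 0, -1; 0, 0, 0; 1, 0, 0],
        !![0, 1, 0; -1, 0, 0; 0, 0, 0]] s := by
  rw [exteriorDerivRow_ΨRB, transpose_ΦRB, ΦRB]
  fin_cases s <;>
    simp only [Fin.zero_eta, Fin.mk_one, Fin.reduceFinMk, cons_val, mul_fin_three,
      EmbeddingLike.apply_eq_iff_eq, vecCons_inj, and_true] <;>
    grind [sin_sq_add_cos_sq]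

lemma hamel_ΨRB_ΦRB {q : Fin 3 → ℝ} (hq : cos (q 1) ≠ 0) (s p w : Fin 3) :
    hamel ΨRB ΦRB q s p w = leviCivita s p w := by
  rw [hamel_eq_transpose_mul_exteriorDerivRow_mul,
    transpose_ΦRB_mul_exteriorDerivRow_ΨRB_mul_ΦRB hq]
  fin_cases s <;> fin_cases p <;> fin_cases w <;> rfl

lemma pder_LagRB_vel (Ix Iy Iz : ℝ) (x u : Fin 3 → ℝ) (j : Fin 3) :
    pder (LagRB Ix Iy Iz x) u j = ![Ix, Iy, Iz] j * u j := by
  have hL : LagRB Ix Iy Iz x = fun v => (Ix * v 0 ^ 2 + Iy * v 1 ^ 2 + Iz * v 2 ^ 2) / 2 := rfl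
  rw [hL]
  fin_cases j <;>
    simp (disch := fun_prop) only [pder_div_const, pder_add, pder_mul, pder_pow, pder_const,
      pder_apply] <;>
    simp only [Fin.zero_eta, Fin.mk_one, Fin.reduceFinMk, cons_val, cons_val_zero, cons_val_one,
      Fin.reduceEq, ↓reduceIte] <;>
    ring

lemma boltzmannHamel_LagRB_eq_euler {Ψ Φ : (Fin 3 → ℝ) → Matrix (Fin 3) (Fin 3) ℝ}
    {γ : ℝ → Fin 3 → ℝ} {t : ℝ} (Ix Iy Iz : ℝ)
    (hγ : ∀ s p w, hamel Ψ Φ (γ t) s p w = leviCivita s p w) (i : Fin 3) :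
    deriv (fun t' => pder (LagRB Ix Iy Iz (γ t')) (cvel Ψ γ t') i) t
        - (∑ j, pder (fun y => LagRB Ix Iy Iz y (cvel Ψ γ t)) (γ t) j * Φ (γ t) j i)
        - (∑ j, ∑ k, pder (LagRB Ix Iy Iz (γ t)) (cvel Ψ γ t) j
            * hamel Ψ Φ (γ t) j k i * cvel Ψ γ t k)
      = ![Ix, Iy, Iz] i * deriv (fun t' => cvel Ψ γ t' i) t
          + (cvel Ψ γ t ⨯₃ fun j => ![Ix, Iy, Iz] j * cvel Ψ γ t j) i := by
  have hpos : ∀ j, pder (fun y => LagRB Ix Iy Iz y (cvel Ψ γ t)) (γ t) j = 0 :=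
    fun _ => pder_const _
  simp only [pder_LagRB_vel, deriv_const_mul_field', hpos, hγ, zero_mul, Finset.sum_const_zero,
    sub_zero]
  fin_cases i <;>
    simp only [Fin.zero_eta, Fin.mk_one, Fin.reduceFinMk, Fin.sum_univ_three, leviCivita, cross_apply,
      cons_val, cons_val_zero, cons_val_one, Fin.reduceEq, and_false, and_true, ↓reduceIte] <;>
    ring

theorem rigid_body_boltzmann_hamel_euler_general (Ix Iy Iz : ℝ) :
    (∀ q : Fin 3 → ℝ, cos (q 1) ≠ 0 → ΨRB q * ΦRB q = 1 ∧ ΦRB q * ΨRB q = 1) ∧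
    (∀ q : Fin 3 → ℝ, cos (q 1) ≠ 0 → ∀ s p w : Fin 3,
      hamel ΨRB ΦRB q s p w =
        if s = 0 ∧ p = 1 ∧ w = 2 then 1
        else if s = 0 ∧ p = 2 ∧ w = 1 then -1
        else if s = 1 ∧ p = 2 ∧ w = 0 then 1
        else if s = 1 ∧ p = 0 ∧ w = 2 then -1
        else if s = 2 ∧ p = 0 ∧ w = 1 then 1
        else if s = 2 ∧ p = 1 ∧ w = 0 then -1
        else 0) ∧
    (∀ γ : ℝ → Fin 3 → ℝ, ContDiff ℝ 2 γ → (∀ t, cos (γ t 1) ≠ 0) → ∀ t,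
      (deriv (fun t' => pder (LagRB Ix Iy Iz (γ t')) (cvel ΨRB γ t') 0) t
        - (∑ j, pder (fun y => LagRB Ix Iy Iz y (cvel ΨRB γ t)) (γ t) j * ΦRB (γ t) j 0)
        - (∑ j, ∑ k, pder (LagRB Ix Iy Iz (γ t)) (cvel ΨRB γ t) j
            * hamel ΨRB ΦRB (γ t) j k 0 * cvel ΨRB γ t k)
        = Ix * deriv (fun t' => cvel ΨRB γ t' 0) t
            + (Iz - Iy) * cvel ΨRB γ t 1 * cvel ΨRB γ t 2) ∧
      (deriv (fun t' => pder (LagRB Ix Iy Iz (γ t')) (cvel ΨRB γ t') 1) t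
        - (∑ j, pder (fun y => LagRB Ix Iy Iz y (cvel ΨRB γ t)) (γ t) j * ΦRB (γ t) j 1)
        - (∑ j, ∑ k, pder (LagRB Ix Iy Iz (γ t)) (cvel ΨRB γ t) j
            * hamel ΨRB ΦRB (γ t) j k 1 * cvel ΨRB γ t k)
        = Iy * deriv (fun t' => cvel ΨRB γ t' 1) t
            + (Ix - Iz) * cvel ΨRB γ t 0 * cvel ΨRB γ t 2) ∧
      (deriv (fun t' => pder (LagRB Ix Iy Iz (γ t')) (cvel ΨRB γ t') 2) t
        - (∑ j, pder (fun y => LagRB Ix Iy Iz y (cvel ΨRB γ t)) (γ t) j * ΦRB (γ t) j 2)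
        - (∑ j, ∑ k, pder (LagRB Ix Iy Iz (γ t)) (cvel ΨRB γ t) j
            * hamel ΨRB ΦRB (γ t) j k 2 * cvel ΨRB γ t k)
        = Iz * deriv (fun t' => cvel ΨRB γ t' 2) t
            + (Iy - Ix) * cvel ΨRB γ t 0 * cvel ΨRB γ t 1)) := by
  refine ⟨fun q hq => ⟨ΨRB_mul_ΦRB hq, ΦRB_mul_ΨRB hq⟩, fun q hq => hamel_ΨRB_ΦRB hq,
    fun γ _ hcos t => ?_⟩
  simp only [boltzmannHamel_LagRB_eq_euler Ix Iy Iz (hamel_ΨRB_ΦRB (hcos t))]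
  refine ⟨?_, ?_, ?_⟩ <;> simp only [cross_apply, cons_val, cons_val_zero, cons_val_one] <;> ring

/-- **Euler's equations from the Boltzmann–Hamel equations for the free rigid body.**
On the set `cos θ ≠ 0`: `ΦRB` is the pointwise inverse of `ΨRB`; the nonzero Hamel
coefficients are exactly `γ¹₂₃ = 1 = −γ¹₃₂`, `γ²₃₁ = 1 = −γ²₁₃`, `γ³₁₂ = 1 = −γ³₂₁`
(0-based: `γ¹₂₃` is `hamel ΨRB ΦRB q 0 1 2`); and along any C² curve of Euler angles the
Boltzmann–Hamel expressions give Euler's equations. -/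
theorem rigid_body_boltzmann_hamel_euler (Ix Iy Iz : ℝ)
    (hIx : 0 < Ix) (hIy : 0 < Iy) (hIz : 0 < Iz) :
    (∀ q : Fin 3 → ℝ, cos (q 1) ≠ 0 → ΨRB q * ΦRB q = 1 ∧ ΦRB q * ΨRB q = 1) ∧
    (∀ q : Fin 3 → ℝ, cos (q 1) ≠ 0 → ∀ s p w : Fin 3,
      hamel ΨRB ΦRB q s p w =
        if s = 0 ∧ p = 1 ∧ w = 2 then 1
        else if s = 0 ∧ p = 2 ∧ w = 1 then -1
        else if s = 1 ∧ p = 2 ∧ w = 0 then 1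
        else if s = 1 ∧ p = 0 ∧ w = 2 then -1
        else if s = 2 ∧ p = 0 ∧ w = 1 then 1
        else if s = 2 ∧ p = 1 ∧ w = 0 then -1
        else 0) ∧
    (∀ γ : ℝ → Fin 3 → ℝ, ContDiff ℝ 2 γ → (∀ t, cos (γ t 1) ≠ 0) → ∀ t,
      (deriv (fun t' => pder (LagRB Ix Iy Iz (γ t')) (cvel ΨRB γ t') 0) t
        - (∑ j, pder (fun y => LagRB Ix Iy Iz y (cvel ΨRB γ t)) (γ t) j * ΦRB (γ t) j 0)
        - (∑ j, ∑ k, pder (LagRB Ix Iy Iz (γ t)) (cvel ΨRB γ t) j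
            * hamel ΨRB ΦRB (γ t) j k 0 * cvel ΨRB γ t k)
        = Ix * deriv (fun t' => cvel ΨRB γ t' 0) t
            + (Iz - Iy) * cvel ΨRB γ t 1 * cvel ΨRB γ t 2) ∧
      (deriv (fun t' => pder (LagRB Ix Iy Iz (γ t')) (cvel ΨRB γ t') 1) t
        - (∑ j, pder (fun y => LagRB Ix Iy Iz y (cvel ΨRB γ t)) (γ t) j * ΦRB (γ t) j 1)
        - (∑ j, ∑ k, pder (LagRB Ix Iy Iz (γ t)) (cvel ΨRB γ t) j
            * hamel ΨRB ΦRB (γ t) j k 1 * cvel ΨRB γ t k)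
        = Iy * deriv (fun t' => cvel ΨRB γ t' 1) t
            + (Ix - Iz) * cvel ΨRB γ t 0 * cvel ΨRB γ t 2) ∧
      (deriv (fun t' => pder (LagRB Ix Iy Iz (γ t')) (cvel ΨRB γ t') 2) t
        - (∑ j, pder (fun y => LagRB Ix Iy Iz y (cvel ΨRB γ t)) (γ t) j * ΦRB (γ t) j 2)
        - (∑ j, ∑ k, pder (LagRB Ix Iy Iz (γ t)) (cvel ΨRB γ t) j
            * hamel ΨRB ΦRB (γ t) j k 2 * cvel ΨRB γ t k)
        = Iz * deriv (fun t' => cvel ΨRB γ t' 2) t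
            + (Iy - Ix) * cvel ΨRB γ t 0 * cvel ΨRB γ t 1)) :=
  rigid_body_boltzmann_hamel_euler_general Ix Iy Iz

end
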